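/- arXiv:1202.4101 — 3 statements merged into one kernel-verified Lean document; each statement's English description precedes it below -/
import Mathlib

section
/- Let S be a nonnegative nondecreasing jump function on [0,∞) with jumps γ_{x_i} at countably many points x_i, and let S^ε be approximations with jumps γ^ε_{x_i^ε} at points x_i^ε, such that S^ε_R → S_R and, for an enumeration with γ_{x_1} ≥ γ_{x_2} ≥ …, there exists m(ε) → ∞ with sup_{1≤i≤m} |x_i^ε − x_i| → 0 and m · sup_{1≤i≤m} |γ^ε_{x_i^ε} − γ_{x_i}| → 0 as ε → 0. Then for every η > 0, every 1 ≤ k ≤ m(ε), and all sufficiently small ε, the tail sums satisfy ∑_{i>k} γ^ε_{x_i^ε} ≤ ∑_{i>k} γ_{x_i} + 2η. -/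
open Filter Topology Finset

/- The tail beyond `k` is the total sum minus the first `k` jumps. The totals differ by less
than `η` once `S^ε_R` is close to `S_R`, and each of the first `k ≤ m` jumps is off by at most
`η / m`, so the heads differ by at most `η` as well. -/

theorem sum_range_le_of_mul_le {d : ℕ → ℝ} {k m : ℕ} {η : ℝ} (hk : k ≤ m) (hη : 0 ≤ η)
    (h : ∀ i < k, (m : ℝ) * d i ≤ η) : ∑ i ∈ range k, d i ≤ η := by
  rcases Nat.eq_zero_or_pos m with rfl | hm
  · simpa [Nat.le_zero.mp hk] using hη
  have hm' : (0 : ℝ) < m := by exact_mod_cast hm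
  calc ∑ i ∈ range k, d i
      ≤ #(range k) • (η / m) := sum_le_card_nsmul _ _ _ fun i hi =>
        (le_div_iff₀' hm').mpr (h i (mem_range.mp hi))
    _ ≤ m * (η / m) := by
        rw [card_range, nsmul_eq_mul]
        gcongr
    _ = η := mul_div_cancel₀ η hm'.ne'

theorem tsum_nat_add_le_tsum_nat_add_add {f g : ℕ → ℝ} (hf : Summable f) (hg : Summable g)
    (k : ℕ) {a b : ℝ} (htotal : ∑' i, f i ≤ ∑' i, g i + a)
    (hhead : ∑ i ∈ range k, |f i - g i| ≤ b) :
    ∑' i, f (i + k) ≤ ∑' i, g (i + k) + (a + b) := by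
  have hhead' : ∑ i ∈ range k, g i - ∑ i ∈ range k, f i ≤ b := by
    rw [← sum_sub_distrib]
    exact (sum_le_sum fun i _ => (le_abs_self _).trans_eq (abs_sub_comm _ _)).trans hhead
  rw [← hf.sum_add_tsum_nat_add k, ← hg.sum_add_tsum_nat_add k] at htotal
  linarith

theorem stmt0_general
    (γ : ℕ → ℝ) (γε : ℝ → ℕ → ℝ) (x : ℕ → ℝ) (xε : ℝ → ℕ → ℝ)
    (η : ℝ) (m : ℝ → ℕ)
    (hsum : Summable γ) (hsumε : ∀ ε, Summable (γε ε))
    (hη : 0 < η)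
    -- `S^ε_R → S_{R+δ'}`-type control: in fact `S^ε_R ≤ S_{R+δ'}` eventually
    -- follows from `S^ε_R → S_R`; we assume the convergence itself:
    (hconv : Tendsto (fun ε => ∑' i, γε ε i) (𝓝[>] (0 : ℝ)) (𝓝 (∑' i, γ i)))
    (hclose : ∀ η' > (0 : ℝ), ∀ᶠ ε in 𝓝[>] (0 : ℝ),
      ∀ i < m ε, |xε ε i - x i| < η' ∧ (m ε : ℝ) * |γε ε i - γ i| < η') :
    ∀ᶠ ε in 𝓝[>] (0 : ℝ), ∀ k, 1 ≤ k → k ≤ m ε →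
      ∑' i, γε ε (i + k) ≤ (∑' i, γ (i + k)) + 2 * η := by
  have htotal : ∀ᶠ ε in 𝓝[>] (0 : ℝ), ∑' i, γε ε i < ∑' i, γ i + η :=
    hconv.eventually (gt_mem_nhds (lt_add_of_pos_right _ hη))
  filter_upwards [htotal, hclose η hη] with ε htotal hclose k _ hk
  have hhead : ∑ i ∈ range k, |γε ε i - γ i| ≤ η :=
    sum_range_le_of_mul_le hk hη.le fun i hi => (hclose i (hi.trans_le hk)).2.le
  rw [two_mul]
  exact tsum_nat_add_le_tsum_nat_add_add (hsumε ε) hsum k htotal.le hhead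

/-- tail-sum comparison for the jump sizes of approximating
nonnegative nondecreasing jump functions.  The jump sizes `γ` (resp. `γε ε`)
are enumerated so that `γ` is nonincreasing; `S^ε_R = ∑' i, γε ε i` converges
to `S_R = ∑' i, γ i`; `m ε → ∞` with the uniform closeness of locations and
(size-weighted) jump sizes; and `S_{R+δ'} − S_R < η`.  Then eventually in `ε`,
for every `1 ≤ k ≤ m ε`, `∑_{i>k} γε ε i ≤ ∑_{i>k} γ i + 2η`. -/
theorem stmt0
    (γ : ℕ → ℝ) (γε : ℝ → ℕ → ℝ) (x : ℕ → ℝ) (xε : ℝ → ℕ → ℝ)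
    (R δ' η SRδ : ℝ) (m : ℝ → ℕ)
    (hγpos : ∀ i, 0 < γ i) (hγεpos : ∀ ε i, 0 < γε ε i)
    (hanti : Antitone γ)
    (hx : ∀ i, x i ∈ Set.Icc 0 R) (hxε : ∀ ε i, xε ε i ∈ Set.Icc 0 R)
    (hsum : Summable γ) (hsumε : ∀ ε, Summable (γε ε))
    (hη : 0 < η) (hδ' : 0 < δ')
    -- `S_{R+δ'} − S_R < η`, with `S_R = ∑' i, γ i`:
    (hSRδle : ∑' i, γ i ≤ SRδ)
    (hjump : SRδ - ∑' i, γ i < η)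
    -- `S^ε_R → S_{R+δ'}`-type control: in fact `S^ε_R ≤ S_{R+δ'}` eventually
    -- follows from `S^ε_R → S_R`; we assume the convergence itself:
    (hconv : Tendsto (fun ε => ∑' i, γε ε i) (𝓝[>] (0 : ℝ)) (𝓝 (∑' i, γ i)))
    (hm : Tendsto m (𝓝[>] (0 : ℝ)) atTop)
    (hclose : ∀ η' > (0 : ℝ), ∀ᶠ ε in 𝓝[>] (0 : ℝ),
      ∀ i < m ε, |xε ε i - x i| < η' ∧ (m ε : ℝ) * |γε ε i - γ i| < η') :
    ∀ᶠ ε in 𝓝[>] (0 : ℝ), ∀ k, 1 ≤ k → k ≤ m ε →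
      ∑' i, γε ε (i + k) ≤ (∑' i, γ (i + k)) + 2 * η :=
  stmt0_general γ γε x xε η m hsum hsumε hη hconv hclose
end

section
/- Let {T_i, i ∈ ℕ*} be i.i.d. mean-1 exponential random variables and suppose the nonnegative sequences (γ^ε_i)_{i≥1} (indexed by ε > 0) and (γ_i)_{i≥1} are summable and satisfy: for some m = m(ε) → ∞, m · sup_{1≤i≤m} |γ^ε_i − γ_i| → 0 as ε → 0, and for every η > 0 and all small ε, ∑_{i>m} γ^ε_i ≤ ∑_{i>m} γ_i + η. Then ∑_{i≥1} γ^ε_i T_i converges to ∑_{i≥1} γ_i T_i in probability as ε → 0. -/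
/-!
Since `E T_i = 1`, we have `E |∑ (γε_i - γ_i) T_i| ≤ ∑ |γε_i - γ_i|`, so it is enough that
`γε → γ` in `ℓ¹`; convergence in `L¹` then gives convergence in probability. The indices
`i < m` contribute at most `m · sup_{i<m} |γε_i - γ_i|`, and the indices `i ≥ m` at most
`∑_{i≥m} γε_i + ∑_{i≥m} γ_i ≤ 2 ∑_{i≥m} γ_i + η`, which is small because `m → ∞`.
-/

open Filter Set Topology MeasureTheory ProbabilityTheory
open scoped ENNReal

lemma lintegral_enorm_expMeasure {r : ℝ} (hr : 0 < r) :
    ∫⁻ x, ‖x‖ₑ ∂expMeasure r = ENNReal.ofReal r⁻¹ := by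
  have hdensity : (fun x => exponentialPDF r x * ‖x‖ₑ) =
      (Ioi 0).indicator
        fun x => ENNReal.ofReal (r * (x ^ ((2 : ℝ) - 1) * Real.exp (-(r * x)))) := by
    ext x
    rcases lt_or_ge 0 x with hx | hx
    · rw [indicator_of_mem (mem_Ioi.2 hx), exponentialPDF_of_nonneg hx.le,
        Real.enorm_of_nonneg hx.le, ← ENNReal.ofReal_mul (by positivity)]
      norm_num [mul_comm, mul_left_comm]
    · rw [indicator_of_notMem (notMem_Ioi.2 hx)]
      rcases hx.lt_or_eq with hx | rfl
      · simp [exponentialPDF_of_neg hx]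
      · simp
  have hΓ := Real.integral_rpow_mul_exp_neg_mul_Ioi two_pos hr
  have hint : IntegrableOn (fun x => r * (x ^ ((2 : ℝ) - 1) * Real.exp (-(r * x)))) (Ioi 0) :=
    (Integrable.of_integral_ne_zero (by rw [hΓ]; positivity)).const_mul r
  have hmeas : Measurable (exponentialPDF r) := (measurable_exponentialPDFReal r).ennreal_ofReal
  change ∫⁻ x, ‖x‖ₑ ∂volume.withDensity (exponentialPDF r) = _
  rw [lintegral_withDensity_eq_lintegral_mul _ hmeas measurable_enorm]
  change ∫⁻ x, exponentialPDF r x * ‖x‖ₑ = _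
  rw [hdensity, lintegral_indicator measurableSet_Ioi,
    ← ofReal_integral_eq_lintegral_ofReal hint
      (ae_restrict_of_forall_mem measurableSet_Ioi fun x hx => by positivity [mem_Ioi.1 hx]),
    integral_const_mul, hΓ, Real.Gamma_two]
  congr 1
  rw [Real.rpow_two]
  field_simp

lemma Finset.sum_range_le_of_mul_le {f : ℕ → ℝ} {n : ℕ} {η : ℝ} (hη : 0 ≤ η)
    (h : ∀ i < n, n * f i ≤ η) : ∑ i ∈ Finset.range n, f i ≤ η := by
  rcases Nat.eq_zero_or_pos n with rfl | hn
  · simpa using hη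
  have hn' : (0 : ℝ) < n := Nat.cast_pos.2 hn
  refine le_of_mul_le_mul_left ?_ hn'
  calc (n : ℝ) * ∑ i ∈ Finset.range n, f i = ∑ i ∈ Finset.range n, n * f i := Finset.mul_sum ..
    _ ≤ ∑ _i ∈ Finset.range n, η := Finset.sum_le_sum fun i hi => h i (Finset.mem_range.1 hi)
    _ = n * η := by simp

lemma tsum_abs_sub_le_of_nonneg {a b : ℕ → ℝ} (ha0 : ∀ i, 0 ≤ a i) (hb0 : ∀ i, 0 ≤ b i)
    (ha : Summable a) (hb : Summable b) (n : ℕ) :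
    ∑' i, |a i - b i| ≤
      ∑ i ∈ Finset.range n, |a i - b i| + (∑' i, a (i + n) + ∑' i, b (i + n)) := by
  have hab : Summable fun i => |a i - b i| := (ha.sub hb).abs
  rw [← hab.sum_add_tsum_nat_add n, ← ((summable_nat_add_iff n).2 ha).tsum_add
    ((summable_nat_add_iff n).2 hb)]
  gcongr with i
  · exact (summable_nat_add_iff n).2 hab
  · exact ((summable_nat_add_iff n).2 ha).add ((summable_nat_add_iff n).2 hb)
  · exact abs_sub_le_of_nonneg_of_le (ha0 _) (le_add_of_nonneg_right (hb0 _)) (hb0 _)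
      (le_add_of_nonneg_left (ha0 _))

theorem tendsto_tsum_abs_sub_of_eventually_close {α : Type*} {l : Filter α} {a : α → ℕ → ℝ}
    {b : ℕ → ℝ} {m : α → ℕ} (ha0 : ∀ x i, 0 ≤ a x i) (hb0 : ∀ i, 0 ≤ b i)
    (ha : ∀ x, Summable (a x)) (hb : Summable b) (hm : Tendsto m l atTop)
    (hclose : ∀ η > (0 : ℝ), ∀ᶠ x in l, ∀ i < m x, (m x : ℝ) * |a x i - b i| < η)
    (htail : ∀ η > (0 : ℝ), ∀ᶠ x in l, ∑' i, a x (i + m x) ≤ ∑' i, b (i + m x) + η) :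
    Tendsto (fun x => ∑' i, |a x i - b i|) l (𝓝 0) := by
  refine tendsto_order.2
    ⟨fun δ hδ => .of_forall fun x => hδ.trans_le (tsum_nonneg fun _ => abs_nonneg _),
      fun δ hδ => ?_⟩
  have hη : 0 < δ / 4 := by positivity
  have hbtail : ∀ᶠ x in l, ∑' i, b (i + m x) < δ / 4 :=
    ((tendsto_sum_nat_add b).comp hm).eventually (gt_mem_nhds hη)
  filter_upwards [hclose _ hη, htail _ hη, hbtail] with x hx_close hx_tail hx_btail
  have hhead := Finset.sum_range_le_of_mul_le hη.le fun i hi => (hx_close i hi).le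
  linarith [tsum_abs_sub_le_of_nonneg (ha0 x) hb0 (ha x) hb (m x)]

section WeightedSeries

variable {Ω : Type*} [MeasurableSpace Ω] {μ : Measure Ω} {T : ℕ → Ω → ℝ} {C : ℝ≥0∞}

lemma lintegral_tsum_enorm_mul_le (hT : ∀ i, AEMeasurable (T i) μ)
    (hTC : ∀ i, ∫⁻ ω, ‖T i ω‖ₑ ∂μ ≤ C) (c : ℕ → ℝ) :
    ∫⁻ ω, ∑' i, ‖c i * T i ω‖ₑ ∂μ ≤ (∑' i, ‖c i‖ₑ) * C := by
  simp_rw [enorm_mul]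
  rw [lintegral_tsum fun i => ((hT i).enorm.const_mul _), ← ENNReal.tsum_mul_right]
  gcongr with i
  rw [lintegral_const_mul'' _ (hT i).enorm]
  gcongr
  exact hTC i

lemma ae_summable_mul (hT : ∀ i, AEMeasurable (T i) μ) (hC : C ≠ ∞)
    (hTC : ∀ i, ∫⁻ ω, ‖T i ω‖ₑ ∂μ ≤ C) {c : ℕ → ℝ} (hc : Summable c) :
    ∀ᵐ ω ∂μ, Summable fun i => c i * T i ω := by
  have hfin : ∫⁻ ω, ∑' i, ‖c i * T i ω‖ₑ ∂μ ≠ ∞ :=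
    ((lintegral_tsum_enorm_mul_le hT hTC c).trans_lt (ENNReal.mul_lt_top
      (tsum_enorm_ne_top_iff_summable_norm.2 hc.norm).lt_top hC.lt_top)).ne
  filter_upwards [ae_lt_top' (AEMeasurable.tsum fun i => ((hT i).const_mul _).enorm) hfin]
    with ω hω
  exact (tsum_enorm_ne_top_iff_summable_norm.1 hω.ne).of_norm

lemma aestronglyMeasurable_tsum_mul (hT : ∀ i, AEMeasurable (T i) μ) (hC : C ≠ ∞)
    (hTC : ∀ i, ∫⁻ ω, ‖T i ω‖ₑ ∂μ ≤ C) {c : ℕ → ℝ} (hc : Summable c) :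
    AEStronglyMeasurable (fun ω => ∑' i, c i * T i ω) μ := by
  refine aestronglyMeasurable_of_tendsto_ae atTop
    (f := fun n ω => ∑ i ∈ Finset.range n, c i * T i ω)
    (fun n => (Finset.aemeasurable_fun_sum _ fun i _ => (hT i).const_mul _).aestronglyMeasurable) ?_
  filter_upwards [ae_summable_mul hT hC hTC hc] with ω hω
  exact hω.tendsto_sum_tsum_nat

lemma eLpNorm_one_tsum_mul_le (hT : ∀ i, AEMeasurable (T i) μ)
    (hTC : ∀ i, ∫⁻ ω, ‖T i ω‖ₑ ∂μ ≤ C) (c : ℕ → ℝ) :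
    eLpNorm (fun ω => ∑' i, c i * T i ω) 1 μ ≤ (∑' i, ‖c i‖ₑ) * C := by
  rw [eLpNorm_one_eq_lintegral_enorm]
  exact (lintegral_mono fun ω => enorm_tsum_le_tsum_enorm).trans
    (lintegral_tsum_enorm_mul_le hT hTC c)

theorem tendstoInMeasure_tsum_mul {α : Type*} {l : Filter α} (hT : ∀ i, AEMeasurable (T i) μ)
    (hC : C ≠ ∞) (hTC : ∀ i, ∫⁻ ω, ‖T i ω‖ₑ ∂μ ≤ C) {a : α → ℕ → ℝ} {b : ℕ → ℝ}
    (ha : ∀ x, Summable (a x)) (hb : Summable b)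
    (hab : Tendsto (fun x => ∑' i, |a x i - b i|) l (𝓝 0)) :
    TendstoInMeasure μ (fun x ω => ∑' i, a x i * T i ω) l (fun ω => ∑' i, b i * T i ω) := by
  refine tendstoInMeasure_of_tendsto_eLpNorm one_ne_zero
    (fun x => aestronglyMeasurable_tsum_mul hT hC hTC (ha x))
    (aestronglyMeasurable_tsum_mul hT hC hTC hb) ?_
  have hdiff : ∀ x, (fun ω => ∑' i, a x i * T i ω) - (fun ω => ∑' i, b i * T i ω)
      =ᵐ[μ] fun ω => ∑' i, (a x i - b i) * T i ω := fun x => by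
    filter_upwards [ae_summable_mul hT hC hTC (ha x), ae_summable_mul hT hC hTC hb]
      with ω hωa hωb
    simp only [Pi.sub_apply, sub_mul, hωa.tsum_sub hωb]
  have hbound : Tendsto (fun x => (∑' i, ‖a x i - b i‖ₑ) * C) l (𝓝 0) := by
    have := ENNReal.Tendsto.mul_const (ENNReal.tendsto_ofReal hab) (Or.inr hC)
    rw [ENNReal.ofReal_zero, zero_mul] at this
    refine this.congr fun x => ?_
    rw [ENNReal.ofReal_tsum_of_nonneg (fun i => abs_nonneg _) ((ha x).sub hb).abs]
    simp_rw [Real.enorm_eq_ofReal_abs]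
  refine tendsto_of_tendsto_of_tendsto_of_le_of_le tendsto_const_nhds hbound (fun _ => bot_le)
    fun x => ?_
  rw [eLpNorm_congr_ae (hdiff x)]
  exact eLpNorm_one_tsum_mul_le hT hTC _

end WeightedSeries

theorem stmt1_general
    {Ω : Type*} [MeasurableSpace Ω] (μ : Measure Ω)
    (T : ℕ → Ω → ℝ)
    (hTmeas : ∀ i, Measurable (T i))
    (hTlaw : ∀ i, Measure.map (T i) μ = expMeasure 1)
    (γ : ℕ → ℝ) (γε : ℝ → ℕ → ℝ) (m : ℝ → ℕ)
    (hγ : ∀ i, 0 ≤ γ i) (hγε : ∀ ε i, 0 ≤ γε ε i)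
    (hsum : Summable γ) (hsumε : ∀ ε, Summable (γε ε))
    (hm : Tendsto m (𝓝[>] (0 : ℝ)) atTop)
    (hclose : ∀ η > (0 : ℝ), ∀ᶠ ε in 𝓝[>] (0 : ℝ),
      ∀ i < m ε, (m ε : ℝ) * |γε ε i - γ i| < η)
    (htail : ∀ η > (0 : ℝ), ∀ᶠ ε in 𝓝[>] (0 : ℝ),
      ∑' i, γε ε (i + m ε) ≤ (∑' i, γ (i + m ε)) + η) :
    TendstoInMeasure μ (fun ε ω => ∑' i, γε ε i * T i ω) (𝓝[>] (0 : ℝ))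
      (fun ω => ∑' i, γ i * T i ω) := by
  have hmean : ∀ i, ∫⁻ ω, ‖T i ω‖ₑ ∂μ ≤ 1 := fun i => by
    rw [← lintegral_map measurable_enorm (hTmeas i), hTlaw i,
      lintegral_enorm_expMeasure one_pos, inv_one, ENNReal.ofReal_one]
  exact tendstoInMeasure_tsum_mul (fun i => (hTmeas i).aemeasurable) ENNReal.one_ne_top hmean
    hsumε hsum (tendsto_tsum_abs_sub_of_eventually_close hγε hγ hsumε hsum hm hclose htail)

/-- if `(T i)` are i.i.d. mean-1 exponential random variables and
the summable nonnegative coefficient sequences `γε ε` approximate `γ` in the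
stated sense, then `∑ i, γε ε i * T i → ∑ i, γ i * T i` in probability as `ε → 0`. -/
theorem stmt1
    {Ω : Type*} [MeasurableSpace Ω] (μ : Measure Ω) [IsProbabilityMeasure μ]
    (T : ℕ → Ω → ℝ)
    (hTmeas : ∀ i, Measurable (T i))
    (hTlaw : ∀ i, Measure.map (T i) μ = expMeasure 1)
    (hTindep : iIndepFun T μ)
    (γ : ℕ → ℝ) (γε : ℝ → ℕ → ℝ) (m : ℝ → ℕ)
    (hγ : ∀ i, 0 ≤ γ i) (hγε : ∀ ε i, 0 ≤ γε ε i)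
    (hsum : Summable γ) (hsumε : ∀ ε, Summable (γε ε))
    (hm : Tendsto m (𝓝[>] (0 : ℝ)) atTop)
    (hclose : ∀ η > (0 : ℝ), ∀ᶠ ε in 𝓝[>] (0 : ℝ),
      ∀ i < m ε, (m ε : ℝ) * |γε ε i - γ i| < η)
    (htail : ∀ η > (0 : ℝ), ∀ᶠ ε in 𝓝[>] (0 : ℝ),
      ∑' i, γε ε (i + m ε) ≤ (∑' i, γ (i + m ε)) + η) :
    TendstoInMeasure μ (fun ε ω => ∑' i, γε ε i * T i ω) (𝓝[>] (0 : ℝ))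
      (fun ω => ∑' i, γ i * T i ω) :=
  stmt1_general μ T hTmeas hTlaw γ γε m hγ hγε hsum hsumε hm hclose htail
end

section
/- Let 0 < α < 1, 0 ≤ a < α, b with a < b < α < 2b, δ ∈ (0,1), and for i ≥ 2 let c_i = (δi)^a (1 − e^{−(δi)^{1−a}}) and let M_i be independent Poisson random variables with E[M_i] ≤ R^α / (δ^α (i−1)^{1+α}). Then for θ = R^{−b}, the sum ∑_{i=2}^{⌈R/δ⌉} (e^{c_i θ} − 1 − c_i θ) E[M_i] is bounded above by C(α,a,δ) · R^{α−2b} · max(R^{2a−α}, log R) for some constant C(α,a,δ) and all large R; in particular this bound is O(R^{−c'}) for some c' > 0 as R → ∞. -/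
/-!
For `x = c_i θ` we have `0 ≤ x ≤ (δ i)^a R^{-b} ≤ R^{a-b} ≤ 1`, so `e^x - 1 - x ≤ x^2`
bounds the `i`-th summand by a constant times `R^{α-2b} (i-1)^{2a-α-1}`. With `s = 2a - α < 1`,
the sum `∑_{j ≤ R/δ} j^{s-1}` is `O(R^s)` for `s > 0` by comparison with `∫ x^{s-1}`, and
`O(log R)` for `s ≤ 0` by the harmonic bound. The decay then follows from
`log R ≤ R^{(2b-α)/2}` for large `R`.
-/

open Filter Real Finset

lemma sum_Icc_rpow_sub_one_le_rpow_div {s : ℝ} (hs0 : 0 < s) (hs1 : s ≤ 1) (M : ℕ) :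
    ∑ j ∈ Icc 1 M, (j : ℝ) ^ (s - 1) ≤ (M : ℝ) ^ s / s := by
  rcases M with _ | M
  · simp [zero_rpow hs0.ne']
  -- The term `j = 1` is split off: as `0 ^ (s - 1) = 0`, `x ^ (s - 1)` is antitone only
  -- on `[1, ∞)`.
  have hanti : AntitoneOn (fun x : ℝ ↦ x ^ (s - 1)) (Set.Icc 1 (1 + M)) :=
    fun x hx y _ hxy ↦ rpow_le_rpow_of_nonpos (by linarith [hx.1]) hxy (by linarith)
  have hint : ∫ x in (1 : ℝ)..1 + M, x ^ (s - 1) = ((1 + M) ^ s - 1) / s := by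
    rw [integral_rpow (Or.inl (by linarith))]
    simp
  have hs : 1 ≤ 1 / s := by rw [le_div_iff₀ hs0]; linarith
  calc ∑ j ∈ Icc 1 (M + 1), (j : ℝ) ^ (s - 1)
      = ∑ i ∈ range M, ((1 : ℝ) + ↑(i + 1)) ^ (s - 1) + 1 := by
        rw [← Ico_add_one_right_eq_Icc, sum_Ico_eq_sum_range, Nat.add_sub_cancel,
          sum_range_succ']
        simp [add_comm]
    _ ≤ ((1 + M) ^ s - 1) / s + 1 := by grw [hanti.sum_le_integral, hint]
    _ ≤ ((M + 1 : ℕ) : ℝ) ^ s / s := by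
        push_cast
        rw [sub_div, add_comm (M : ℝ)]
        linarith

lemma sum_Icc_rpow_sub_one_le_mul_max {s δ : ℝ} (hs : s < 1) (hδ : 0 < δ) :
    ∃ K > 0, ∀ᶠ R in atTop, ∀ M : ℕ, (M : ℝ) ≤ R / δ →
      ∑ j ∈ Icc 1 M, (j : ℝ) ^ (s - 1) ≤ K * max (R ^ s) (log R) := by
  rcases lt_or_ge 0 s with hs0 | hs0
  · refine ⟨1 / (δ ^ s * s), by positivity, ?_⟩
    filter_upwards [eventually_ge_atTop 0] with R hR M hM
    calc ∑ j ∈ Icc 1 M, (j : ℝ) ^ (s - 1) ≤ (M : ℝ) ^ s / s :=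
          sum_Icc_rpow_sub_one_le_rpow_div hs0 hs.le M
      _ ≤ (R / δ) ^ s / s := by gcongr
      _ = 1 / (δ ^ s * s) * R ^ s := by rw [div_rpow hR hδ.le]; field_simp
      _ ≤ 1 / (δ ^ s * s) * max (R ^ s) (log R) := by gcongr; exact le_max_left _ _
  · refine ⟨2 + |log δ|, by positivity, ?_⟩
    filter_upwards [tendsto_log_atTop.eventually_ge_atTop 1, eventually_ge_atTop δ]
      with R hlogR hRδ M hM
    have hlogM : log M ≤ log R - log δ := by
      rw [← log_div (by linarith) hδ.ne']
      rcases M.eq_zero_or_pos with rfl | hM0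
      · simpa using log_nonneg ((one_le_div hδ).2 hRδ)
      · exact log_le_log (by exact_mod_cast hM0) hM
    calc ∑ j ∈ Icc 1 M, (j : ℝ) ^ (s - 1) ≤ ∑ j ∈ Icc 1 M, (j : ℝ)⁻¹ := by
          gcongr with j hj
          rw [← rpow_neg_one]
          exact rpow_le_rpow_of_exponent_le (by exact_mod_cast (mem_Icc.1 hj).1) (by linarith)
      _ = harmonic M := by simp [harmonic_eq_sum_Icc]
      _ ≤ 1 + log M := harmonic_le_one_add_log M
      _ ≤ (2 + |log δ|) * log R := by nlinarith [neg_le_abs (log δ), abs_nonneg (log δ)]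
      _ ≤ (2 + |log δ|) * max (R ^ s) (log R) := by gcongr; exact le_max_right _ _

lemma sum_Icc_two_comp_sub_one (f : ℝ → ℝ) (N : ℕ) :
    ∑ i ∈ Icc 2 N, f ((i : ℝ) - 1) = ∑ j ∈ Icc 1 (N - 1), f j := by
  rcases N with _ | N
  · simp
  rw [Nat.add_sub_cancel, ← map_add_right_Icc 1 N 1, sum_map]
  simp

lemma exp_sub_one_sub_le_sq_of_le {x y : ℝ} (hx : 0 ≤ x) (hxy : x ≤ y) (hy : y ≤ 1) :
    exp x - 1 - x ≤ y ^ 2 :=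
  calc exp x - 1 - x ≤ |exp x - 1 - x| := le_abs_self _
    _ ≤ x ^ 2 := abs_exp_sub_one_sub_id_le (by rw [abs_of_nonneg hx]; linarith)
    _ ≤ y ^ 2 := by gcongr

/-- The paper's `c_i` is `expCoeff a (δ * i)`. -/
noncomputable def expCoeff (a x : ℝ) : ℝ := x ^ a * (1 - exp (-(x ^ (1 - a))))

lemma expCoeff_nonneg (a : ℝ) {x : ℝ} (hx : 0 ≤ x) : 0 ≤ expCoeff a x :=
  mul_nonneg (rpow_nonneg hx a)
    (sub_nonneg.2 (exp_le_one_iff.2 (neg_nonpos.2 (rpow_nonneg hx _))))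

lemma expCoeff_le_rpow (a : ℝ) {x : ℝ} (hx : 0 ≤ x) : expCoeff a x ≤ x ^ a :=
  mul_le_of_le_one_right (rpow_nonneg hx a) (by linarith [exp_pos (-(x ^ (1 - a)))])

lemma exp_expCoeff_mul_sub_le {a b x R : ℝ} (ha : 0 ≤ a) (hab : a ≤ b) (hx : 0 ≤ x)
    (hxR : x ≤ R) (hR : 1 ≤ R) :
    exp (expCoeff a x * R ^ (-b)) - 1 - expCoeff a x * R ^ (-b)
      ≤ x ^ (2 * a) * R ^ (-(2 * b)) := by
  have hθ : 0 ≤ R ^ (-b) := rpow_nonneg (by linarith) _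
  calc _ ≤ (x ^ a * R ^ (-b)) ^ 2 := by
        refine exp_sub_one_sub_le_sq_of_le (mul_nonneg (expCoeff_nonneg a hx) hθ)
          (by gcongr; exact expCoeff_le_rpow a hx) ?_
        calc x ^ a * R ^ (-b) ≤ R ^ a * R ^ (-b) := by gcongr
          _ = R ^ (a - b) := by rw [← rpow_add (by linarith), sub_eq_add_neg]
          _ ≤ 1 := rpow_le_one_of_one_le_of_nonpos hR (by linarith)
    _ = x ^ (2 * a) * R ^ (-(2 * b)) := by
        rw [mul_pow, ← rpow_mul_natCast hx, ← rpow_mul_natCast (by linarith)]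
        ring_nf

lemma exp_expCoeff_mul_sub_mul_le {α a b δ R e : ℝ} {i : ℕ} (ha : 0 ≤ a) (hab : a ≤ b)
    (hδ : 0 < δ) (hR : 1 ≤ R) (hi : 2 ≤ i) (hiR : δ * i ≤ R) (he0 : 0 ≤ e)
    (he : e ≤ R ^ α / (δ ^ α * ((i : ℝ) - 1) ^ (1 + α))) :
    (exp (expCoeff a (δ * i) * R ^ (-b)) - 1 - expCoeff a (δ * i) * R ^ (-b)) * e
      ≤ 2 ^ (2 * a) * δ ^ (2 * a - α) * R ^ (α - 2 * b)
        * ((i : ℝ) - 1) ^ (2 * a - α - 1) := by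
  have hi2 : (2 : ℝ) ≤ i := by exact_mod_cast hi
  have hi1 : 0 < (i : ℝ) - 1 := by linarith
  have hR0 : 0 < R := by linarith
  have hδi : (δ * i) ^ (2 * a) ≤ 2 ^ (2 * a) * δ ^ (2 * a) * ((i : ℝ) - 1) ^ (2 * a) := by
    rw [← mul_rpow (by norm_num) hδ.le, ← mul_rpow (by positivity) hi1.le]
    exact rpow_le_rpow (by positivity) (by nlinarith) (by linarith)
  calc _ ≤ (δ * i) ^ (2 * a) * R ^ (-(2 * b))
          * (R ^ α / (δ ^ α * ((i : ℝ) - 1) ^ (1 + α))) :=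
        mul_le_mul (exp_expCoeff_mul_sub_le ha hab (by positivity) hiR hR) he he0
          (by positivity)
    _ ≤ 2 ^ (2 * a) * δ ^ (2 * a) * ((i : ℝ) - 1) ^ (2 * a) * R ^ (-(2 * b))
          * (R ^ α / (δ ^ α * ((i : ℝ) - 1) ^ (1 + α))) := by gcongr
    _ = _ := by
        rw [rpow_sub hδ, rpow_sub hR0, show 2 * a - α - 1 = 2 * a - (1 + α) by ring,
          rpow_sub hi1, rpow_neg hR0.le]
        field_simp

lemma rpow_mul_max_rpow_log_le {β γ : ℝ} (hβ : β < 0) :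
    ∀ᶠ R in atTop, R ^ β * max (R ^ γ) (log R) ≤ R ^ max (β + γ) (β / 2) := by
  filter_upwards [(isLittleO_log_rpow_atTop (r := -(β / 2)) (by linarith)).bound one_pos,
    eventually_ge_atTop 1] with R hlog hR
  have hR0 : 0 < R := by linarith
  have hlog' : log R ≤ R ^ (-(β / 2)) := by
    simpa [abs_of_nonneg (log_nonneg hR), abs_of_nonneg (rpow_nonneg hR0.le _)] using hlog
  rw [mul_max_of_nonneg _ _ (rpow_nonneg hR0.le β)]
  refine max_le ?_ ?_
  · rw [← rpow_add hR0]
    exact rpow_le_rpow_of_exponent_le hR (le_max_left _ _)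
  · calc R ^ β * log R ≤ R ^ β * R ^ (-(β / 2)) := by gcongr
      _ = R ^ (β / 2) := by rw [← rpow_add hR0]; ring_nf
      _ ≤ _ := rpow_le_rpow_of_exponent_le hR (le_max_right _ _)

theorem stmt7_general (α a b δ : ℝ)
    (hα1 : α < 1) (ha0 : 0 ≤ a)
    (hab : a < b) (hbα : b < α) (hα2b : α < 2 * b)
    (hδ0 : 0 < δ) :
    ∃ C > (0:ℝ), ∃ c' > (0:ℝ), ∃ C' > (0:ℝ), ∀ᶠ R in atTop,
      (∀ e : ℕ → ℝ, (∀ i, 0 ≤ e i) →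
        (∀ i : ℕ, 2 ≤ i → e i ≤ R ^ α / (δ ^ α * ((i:ℝ) - 1) ^ (1 + α))) →
        ∑ i ∈ Finset.Icc 2 ⌊R / δ⌋₊,
            (Real.exp ((δ * i) ^ a * (1 - Real.exp (-((δ * i) ^ (1 - a)))) * R ^ (-b))
              - 1
              - (δ * i) ^ a * (1 - Real.exp (-((δ * i) ^ (1 - a)))) * R ^ (-b)) * e i
          ≤ C * R ^ (α - 2 * b) * max (R ^ (2 * a - α)) (Real.log R)) ∧
      C * R ^ (α - 2 * b) * max (R ^ (2 * a - α)) (Real.log R) ≤ C' * R ^ (-c') := by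
  obtain ⟨K, hK0, hK⟩ := sum_Icc_rpow_sub_one_le_mul_max (s := 2 * a - α) (by linarith) hδ0
  set C := 2 ^ (2 * a) * δ ^ (2 * a - α) * K
  refine ⟨C, by positivity, -max (α - 2 * b + (2 * a - α)) ((α - 2 * b) / 2),
    neg_pos.2 (max_lt (by linarith) (by linarith)), C, by positivity, ?_⟩
  filter_upwards [hK, rpow_mul_max_rpow_log_le (γ := 2 * a - α) (by linarith : α - 2 * b < 0),
    eventually_ge_atTop 1] with R hsum hdecay hR
  refine ⟨fun e he0 he ↦ ?_, ?_⟩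
  · set N := ⌊R / δ⌋₊
    set D := 2 ^ (2 * a) * δ ^ (2 * a - α) * R ^ (α - 2 * b)
    have hN : (N : ℝ) ≤ R / δ := Nat.floor_le (by positivity)
    calc _ ≤ ∑ i ∈ Icc 2 N, D * ((i : ℝ) - 1) ^ (2 * a - α - 1) := by
          refine sum_le_sum fun i hi ↦ exp_expCoeff_mul_sub_mul_le ha0 hab.le hδ0 hR
            (mem_Icc.1 hi).1 ?_ (he0 i) (he i (mem_Icc.1 hi).1)
          exact (le_div_iff₀' hδ0).1 ((Nat.cast_le.2 (mem_Icc.1 hi).2).trans hN)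
      _ = D * ∑ j ∈ Icc 1 (N - 1), (j : ℝ) ^ (2 * a - α - 1) := by
          rw [← mul_sum, sum_Icc_two_comp_sub_one (· ^ (2 * a - α - 1))]
      _ ≤ D * (K * max (R ^ (2 * a - α)) (log R)) := by
          gcongr
          exact hsum _ ((Nat.cast_le.2 (N.sub_le 1)).trans hN)
      _ = C * R ^ (α - 2 * b) * max (R ^ (2 * a - α)) (log R) := by ring
  · rw [neg_neg, mul_assoc]
    gcongr

/-- with `0 ≤ a < b < α < 2b`, `δ ∈ (0,1)`,
`c_i = (δi)^a (1 − e^{−(δi)^{1−a}})`, `θ = R^{−b}`, and any nonnegative weights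
`e i ≤ R^α/(δ^α (i−1)^{1+α})` (the bound on `E[M_i]`), the sum
`∑_{i=2}^{⌊R/δ⌋} (e^{c_i θ} − 1 − c_i θ) e i` is bounded by
`C · R^{α−2b} · max(R^{2a−α}, log R)` for large `R`, and this bound is
`O(R^{−c'})` for some `c' > 0`. -/
theorem stmt7 (α a b δ : ℝ)
    (hα0 : 0 < α) (hα1 : α < 1) (ha0 : 0 ≤ a)
    (hab : a < b) (hbα : b < α) (hα2b : α < 2 * b)
    (hδ0 : 0 < δ) (hδ1 : δ < 1) :
    ∃ C > (0:ℝ), ∃ c' > (0:ℝ), ∃ C' > (0:ℝ), ∀ᶠ R in atTop,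
      (∀ e : ℕ → ℝ, (∀ i, 0 ≤ e i) →
        (∀ i : ℕ, 2 ≤ i → e i ≤ R ^ α / (δ ^ α * ((i:ℝ) - 1) ^ (1 + α))) →
        ∑ i ∈ Finset.Icc 2 ⌊R / δ⌋₊,
            (Real.exp ((δ * i) ^ a * (1 - Real.exp (-((δ * i) ^ (1 - a)))) * R ^ (-b))
              - 1
              - (δ * i) ^ a * (1 - Real.exp (-((δ * i) ^ (1 - a)))) * R ^ (-b)) * e i
          ≤ C * R ^ (α - 2 * b) * max (R ^ (2 * a - α)) (Real.log R)) ∧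
      C * R ^ (α - 2 * b) * max (R ^ (2 * a - α)) (Real.log R) ≤ C' * R ^ (-c') :=
  stmt7_general α a b δ hα1 ha0 hab hbα hα2b hδ0
end
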